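/- arXiv:1203.3341 — 2 statements merged into one kernel-verified Lean document; each statement's English description precedes it below -/
import Mathlib

section
/- Let E be a finite-dimensional real normed vector space, T > 0, g : ℝ → E Bochner integrable on the interval [0, T], v : ℝ → ℝ a measurable function with v t ∈ [0, 1] for all t, and ε > 0. Then there exists a measurable function w : ℝ → ℝ with w t ∈ {0, 1} for all t such that for every t ∈ [0, T], ‖∫_0^t (v s − w s) • g s ds‖ ≤ ε. -/
/-!
Cut `[0, ∞)` into cells `[k c, (k + 1) c]` and let `w` be `1` on an initial piece of each cell
whose length is the mass of `v` on that cell, and `0` elsewhere. Then `u = v - w` satisfies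
`|u| ≤ 1` and has zero integral over every cell. Against a continuous `h` whose oscillation at
scale `c` is at most `η`, each cell therefore contributes at most `η c` (subtract the value of `h`
at the left endpoint), so `‖∫₀ᵗ u • h‖ ≤ η t + c sup ‖h‖`. Replacing `g` by a continuous compactly
supported `h` close to it in `L¹(0, T)` costs at most `‖g - h‖₁` because `|u| ≤ 1`, and letting
`c → 0` finishes the proof.
-/

open MeasureTheory Set Filter Topology

def HasZeroCellIntegrals (c : ℝ) (u : ℝ → ℝ) : Prop :=
  ∀ k : ℕ, ∫ s in k * c..(k + 1) * c, u s = 0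

section CellIntegrals

variable {E : Type*} [NormedAddCommGroup E] [NormedSpace ℝ E]

lemma intervalIntegrable_of_abs_le_one {u : ℝ → ℝ} (hum : Measurable u) (hu : ∀ s, |u s| ≤ 1)
    (a b : ℝ) : IntervalIntegrable u volume a b :=
  (intervalIntegrable_const (c := (1 : ℝ))).mono_fun hum.aestronglyMeasurable
    (ae_of_all _ fun s => by simpa using hu s)

lemma norm_smul_le_of_abs_le_one {r : ℝ} (hr : |r| ≤ 1) (x : E) : ‖r • x‖ ≤ ‖x‖ := by
  rw [norm_smul, Real.norm_eq_abs]
  exact mul_le_of_le_one_left (norm_nonneg x) hr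

lemma norm_integral_smul_sub_le {u : ℝ → ℝ} (hum : Measurable u) (hu : ∀ s, |u s| ≤ 1)
    {g h : ℝ → E} {T t : ℝ} (hg : IntegrableOn g (Icc 0 T)) (hh : IntegrableOn h (Icc 0 T))
    (ht : t ∈ Icc 0 T) :
    ‖(∫ s in (0 : ℝ)..t, u s • g s) - ∫ s in (0 : ℝ)..t, u s • h s‖ ≤
      ∫ s in Icc 0 T, ‖g s - h s‖ := by
  have hsub : Ioc 0 t ⊆ Icc 0 T := fun s hs => ⟨hs.1.le, hs.2.trans ht.2⟩
  have hint : ∀ f : ℝ → E, IntegrableOn f (Icc 0 T) →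
      IntervalIntegrable (fun s => u s • f s) volume 0 t := fun f hf =>
    (intervalIntegrable_iff_integrableOn_Ioc_of_le ht.1).2 <|
      (hf.mono_set hsub).bdd_smul 1 hum.aestronglyMeasurable.restrict
        (ae_of_all _ fun s => by simpa using hu s)
  have hgh : IntegrableOn (fun s => ‖g s - h s‖) (Icc 0 T) := (hg.sub hh).norm
  rw [← intervalIntegral.integral_sub (hint g hg) (hint h hh)]
  calc _ ≤ ∫ s in (0 : ℝ)..t, ‖g s - h s‖ :=
        intervalIntegral.norm_integral_le_of_norm_le ht.1 (ae_of_all _ fun s _ => by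
          simpa only [← smul_sub] using norm_smul_le_of_abs_le_one (hu s) (g s - h s))
          ((intervalIntegrable_iff_integrableOn_Ioc_of_le ht.1).2 (hgh.mono_set hsub))
    _ ≤ ∫ s in Icc 0 T, ‖g s - h s‖ := by
        rw [intervalIntegral.integral_of_le ht.1]
        exact setIntegral_mono_set hgh (ae_of_all _ fun s => norm_nonneg _)
          (Eventually.of_forall hsub)

variable [CompleteSpace E]

/-- Subtracting the constant `h a` costs nothing, since `u` has zero mean on `[a, b]`. -/
lemma norm_integral_smul_le_of_integral_eq_zero {u : ℝ → ℝ} {h : ℝ → E} {a b η : ℝ}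
    (hab : a ≤ b) (hui : IntervalIntegrable u volume a b) (hu : ∀ s, |u s| ≤ 1)
    (hu₀ : ∫ s in a..b, u s = 0) (hh : Continuous h) (hη : ∀ s ∈ Ioc a b, ‖h s - h a‖ ≤ η) :
    ‖∫ s in a..b, u s • h s‖ ≤ η * (b - a) := by
  have hconst : ∫ s in a..b, u s • h s = ∫ s in a..b, u s • (h s - h a) := by
    simp_rw [smul_sub]
    rw [intervalIntegral.integral_sub (hui.smul_continuousOn hh.continuousOn)
      (hui.smul_continuousOn continuousOn_const), intervalIntegral.integral_smul_const, hu₀,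
      zero_smul, sub_zero]
  rw [hconst, ← abs_of_nonneg (sub_nonneg.2 hab)]
  refine intervalIntegral.norm_integral_le_of_norm_le_const fun s hs => ?_
  rw [uIoc_of_le hab] at hs
  exact (norm_smul_le_of_abs_le_one (hu s) _).trans (hη s hs)

variable {c η M : ℝ} {u : ℝ → ℝ} {h : ℝ → E}

lemma norm_integral_smul_natCast_mul_le (hc : 0 ≤ c) (hum : Measurable u) (hu : ∀ s, |u s| ≤ 1)
    (hu₀ : HasZeroCellIntegrals c u) (hh : Continuous h)
    (hη : ∀ x y, |x - y| ≤ c → ‖h x - h y‖ ≤ η) (n : ℕ) :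
    ‖∫ s in (0 : ℝ)..n * c, u s • h s‖ ≤ η * (n * c) := by
  have hint : ∀ a b, IntervalIntegrable (fun s => u s • h s) volume a b := fun a b =>
    (intervalIntegrable_of_abs_le_one hum hu a b).smul_continuousOn hh.continuousOn
  induction n with
  | zero => simp
  | succ n ih =>
    have hcell : ‖∫ s in n * c..(n + 1) * c, u s • h s‖ ≤ η * ((n + 1) * c - n * c) :=
      norm_integral_smul_le_of_integral_eq_zero (by nlinarith)
        (intervalIntegrable_of_abs_le_one hum hu _ _) hu (hu₀ n) hh fun s hs =>
          hη s _ (by rw [abs_of_nonneg (by linarith [hs.1])]; linarith [hs.2])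
    push_cast
    rw [← intervalIntegral.integral_add_adjacent_intervals (hint 0 (n * c)) (hint _ _)]
    calc _ ≤ η * (n * c) + η * ((n + 1) * c - n * c) :=
          (norm_add_le _ _).trans (add_le_add ih hcell)
      _ = η * ((n + 1) * c) := by ring

/-- Whole cells contribute at most `η` per unit length, the last partial cell at most `M c`. -/
lemma norm_integral_smul_le_of_hasZeroCellIntegrals (hc : 0 < c) (hum : Measurable u)
    (hu : ∀ s, |u s| ≤ 1) (hu₀ : HasZeroCellIntegrals c u) (hh : Continuous h)
    (hη : ∀ x y, |x - y| ≤ c → ‖h x - h y‖ ≤ η) (hM : ∀ x, ‖h x‖ ≤ M) {t : ℝ} (ht : 0 ≤ t) :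
    ‖∫ s in (0 : ℝ)..t, u s • h s‖ ≤ η * t + M * c := by
  have hint : ∀ a b, IntervalIntegrable (fun s => u s • h s) volume a b := fun a b =>
    (intervalIntegrable_of_abs_le_one hum hu a b).smul_continuousOn hh.continuousOn
  set n := ⌊t / c⌋₊
  have hnt : n * c ≤ t := (le_div_iff₀ hc).1 (Nat.floor_le (div_nonneg ht hc.le))
  have htn : t - n * c ≤ c := by
    have := (div_lt_iff₀ hc).1 (Nat.lt_floor_add_one (t / c))
    linarith
  have hη₀ : 0 ≤ η := by simpa using hη 0 0 (by simpa using hc.le)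
  have htail : ‖∫ s in n * c..t, u s • h s‖ ≤ M * c := by
    calc _ ≤ M * |t - n * c| := intervalIntegral.norm_integral_le_of_norm_le_const fun s _ =>
          (norm_smul_le_of_abs_le_one (hu s) _).trans (hM s)
      _ ≤ M * c := by
        rw [abs_of_nonneg (by linarith)]
        exact mul_le_mul_of_nonneg_left htn ((norm_nonneg _).trans (hM 0))
  rw [← intervalIntegral.integral_add_adjacent_intervals (hint 0 (n * c)) (hint _ _)]
  calc _ ≤ η * (n * c) + M * c := (norm_add_le _ _).trans
        (add_le_add (norm_integral_smul_natCast_mul_le hc.le hum hu hu₀ hh hη n) htail)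
    _ ≤ η * t + M * c := by gcongr

lemma eventually_norm_integral_smul_le {g : ℝ → E} {T ε : ℝ} (hg : IntegrableOn g (Icc 0 T))
    (hε : 0 < ε) :
    ∀ᶠ c in 𝓝[>] (0 : ℝ), ∀ u : ℝ → ℝ, Measurable u → (∀ s, |u s| ≤ 1) →
      HasZeroCellIntegrals c u → ∀ t ∈ Icc 0 T, ‖∫ s in (0 : ℝ)..t, u s • g s‖ ≤ ε := by
  have : (volume.restrict (Icc (0 : ℝ) T)).Regular :=
    Measure.Regular.restrict_of_measure_ne_top measure_Icc_lt_top.ne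
  obtain ⟨h, hh_supp, hgh, hh, hhi⟩ :=
    Integrable.exists_hasCompactSupport_integral_sub_le hg (half_pos hε)
  obtain ⟨M, hM⟩ := hh_supp.exists_bound_of_continuous hh
  have hM₀ : 0 ≤ M := (norm_nonneg _).trans (hM 0)
  set η := ε / (4 * (|T| + 1))
  have hη : 0 < η := by positivity
  obtain ⟨δ, hδ, hδh⟩ := Metric.uniformContinuous_iff.1
    (hh.uniformContinuous_of_tendsto_cocompact hh_supp.is_zero_at_infty) η hη
  filter_upwards [Ioo_mem_nhdsGT (lt_min hδ (by positivity : 0 < ε / (4 * (M + 1))))]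
    with c ⟨hc, hcδ⟩ u hum hu hu₀ t ht
  have hηt : η * t ≤ ε / 4 := calc
    η * t ≤ η * (|T| + 1) := by gcongr; linarith [ht.2, le_abs_self T]
    _ = ε / 4 := by simp only [η]; field_simp
  have hMc : M * c ≤ ε / 4 := calc
    M * c ≤ (M + 1) * (ε / (4 * (M + 1))) := by
      gcongr
      · linarith
      · exact (hcδ.trans_le (min_le_right _ _)).le
    _ = ε / 4 := by field_simp
  have hcont : ‖∫ s in (0 : ℝ)..t, u s • h s‖ ≤ η * t + M * c :=
    norm_integral_smul_le_of_hasZeroCellIntegrals hc hum hu hu₀ hh (fun x y hxy => by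
      simpa [dist_eq_norm] using (hδh (a := x) (b := y) (by
        rw [Real.dist_eq]; exact hxy.trans_lt (hcδ.trans_le (min_le_left _ _)))).le) hM ht.1
  calc _ ≤ ‖∫ s in (0 : ℝ)..t, u s • h s‖ +
        ‖(∫ s in (0 : ℝ)..t, u s • g s) - ∫ s in (0 : ℝ)..t, u s • h s‖ :=
        norm_le_norm_add_norm_sub' _ _
    _ ≤ (η * t + M * c) + ε / 2 :=
        add_le_add hcont ((norm_integral_smul_sub_le hum hu hg hhi ht).trans hgh)
    _ ≤ ε := by linarith

end CellIntegrals

section Chattering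

lemma abs_le_one_of_mem_Icc {x : ℝ} (hx : x ∈ Icc (0 : ℝ) 1) : |x| ≤ 1 :=
  abs_le.2 ⟨by linarith [hx.1], hx.2⟩

noncomputable def cellMass (v : ℝ → ℝ) (c : ℝ) (k : ℕ) : ℝ :=
  ∫ s in k * c..(k + 1) * c, v s

def chatteringSet (v : ℝ → ℝ) (c : ℝ) : Set ℝ :=
  ⋃ k : ℕ, Ioc (k * c) (k * c + cellMass v c k)

noncomputable def chattering (v : ℝ → ℝ) (c : ℝ) : ℝ → ℝ :=
  (chatteringSet v c).indicator 1

variable {v : ℝ → ℝ} {c : ℝ}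

lemma measurableSet_chatteringSet : MeasurableSet (chatteringSet v c) :=
  MeasurableSet.iUnion fun _ => measurableSet_Ioc

lemma measurable_chattering : Measurable (chattering v c) :=
  measurable_const.indicator measurableSet_chatteringSet

lemma chattering_mem (t : ℝ) : chattering v c t ∈ ({0, 1} : Set ℝ) := by
  by_cases ht : t ∈ chatteringSet v c <;> simp [chattering, ht]

lemma abs_chattering_le (t : ℝ) : |chattering v c t| ≤ 1 := by
  rcases chattering_mem (v := v) (c := c) t with h | h <;> rw [h] <;> norm_num

lemma abs_sub_chattering_le (hv : ∀ t, v t ∈ Icc (0 : ℝ) 1) (t : ℝ) :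
    |v t - chattering v c t| ≤ 1 := by
  rcases chattering_mem (v := v) (c := c) t with h | h <;>
    rw [h, abs_le] <;> constructor <;> linarith [(hv t).1, (hv t).2]

variable (hvm : Measurable v) (hv : ∀ t, v t ∈ Icc (0 : ℝ) 1)
include hvm hv

lemma cellMass_mem_Icc (hc : 0 ≤ c) (k : ℕ) : cellMass v c k ∈ Icc 0 c := by
  have hk : (k : ℝ) * c ≤ (k + 1) * c := by nlinarith
  have hint := intervalIntegrable_of_abs_le_one hvm
    (fun t => abs_le_one_of_mem_Icc (hv t)) (k * c) ((k + 1) * c)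
  refine ⟨intervalIntegral.integral_nonneg hk fun t _ => (hv t).1, ?_⟩
  calc cellMass v c k ≤ ∫ _ in k * c..(k + 1) * c, (1 : ℝ) :=
        intervalIntegral.integral_mono_on hk hint intervalIntegrable_const fun t _ => (hv t).2
    _ = c := by simp; ring

lemma chatteringSet_inter_Ioc (hc : 0 < c) (k : ℕ) :
    chatteringSet v c ∩ Ioc (k * c) ((k + 1) * c) = Ioc (k * c) (k * c + cellMass v c k) := by
  have hmass := cellMass_mem_Icc hvm hv hc.le
  ext x
  simp only [chatteringSet, mem_inter_iff, mem_iUnion, mem_Ioc]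
  constructor
  · rintro ⟨⟨j, hjx, hxj⟩, hkx, hxk⟩
    have hj : (j : ℝ) < k + 1 := lt_of_mul_lt_mul_right (hjx.trans_le hxk) hc.le
    have hk : (k : ℝ) < j + 1 :=
      lt_of_mul_lt_mul_right (hkx.trans_le (hxj.trans (by linarith [(hmass j).2]))) hc.le
    obtain rfl : j = k := by
      have : j < k + 1 := by exact_mod_cast hj
      have : k < j + 1 := by exact_mod_cast hk
      omega
    exact ⟨hjx, hxj⟩
  · rintro ⟨hkx, hxk⟩
    exact ⟨⟨k, hkx, hxk⟩, hkx, by linarith [(hmass k).2]⟩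

lemma integral_chattering_cell (hc : 0 < c) (k : ℕ) :
    ∫ s in k * c..(k + 1) * c, chattering v c s = cellMass v c k := by
  rw [intervalIntegral.integral_of_le (by nlinarith), chattering,
    integral_indicator_one measurableSet_chatteringSet, measureReal_restrict_apply
    measurableSet_chatteringSet, chatteringSet_inter_Ioc hvm hv hc, Real.volume_real_Ioc]
  simp [(cellMass_mem_Icc hvm hv hc.le k).1]

lemma hasZeroCellIntegrals_sub_chattering (hc : 0 < c) :
    HasZeroCellIntegrals c fun s => v s - chattering v c s := by
  intro k
  rw [intervalIntegral.integral_sub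
    (intervalIntegrable_of_abs_le_one hvm (fun t => abs_le_one_of_mem_Icc (hv t)) _ _)
    (intervalIntegrable_of_abs_le_one measurable_chattering
      abs_chattering_le _ _),
    integral_chattering_cell hvm hv hc, cellMass, sub_self]

end Chattering

theorem stmt7_general {E : Type*} [NormedAddCommGroup E] [NormedSpace ℝ E]
    [FiniteDimensional ℝ E]
    (T : ℝ) (g : ℝ → E) (hg : IntegrableOn g (Set.Icc 0 T))
    (v : ℝ → ℝ) (hvm : Measurable v) (hv : ∀ t, v t ∈ Set.Icc (0 : ℝ) 1)
    (ε : ℝ) (hε : 0 < ε) :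
    ∃ w : ℝ → ℝ, Measurable w ∧ (∀ t, w t ∈ ({0, 1} : Set ℝ)) ∧
      ∀ t ∈ Set.Icc (0 : ℝ) T, ‖∫ s in (0 : ℝ)..t, (v s - w s) • g s‖ ≤ ε := by
  obtain ⟨c, hbound, hc⟩ :=
    ((eventually_norm_integral_smul_le hg hε).and self_mem_nhdsWithin).exists
  exact ⟨chattering v c, measurable_chattering, chattering_mem,
    hbound _ (hvm.sub measurable_chattering) (abs_sub_chattering_le hv)
      (hasZeroCellIntegrals_sub_chattering hvm hv hc)⟩

/-- Chattering lemma: a relaxed mode control `v` with values in `[0,1]` can be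
approximated by a bang-bang control `w` with values in `{0,1}` so that the
running integrals of the weighted difference are uniformly small. -/
theorem stmt7 {E : Type*} [NormedAddCommGroup E] [NormedSpace ℝ E]
    [FiniteDimensional ℝ E]
    (T : ℝ) (hT : 0 < T) (g : ℝ → E) (hg : IntegrableOn g (Set.Icc 0 T))
    (v : ℝ → ℝ) (hvm : Measurable v) (hv : ∀ t, v t ∈ Set.Icc (0 : ℝ) 1)
    (ε : ℝ) (hε : 0 < ε) :
    ∃ w : ℝ → ℝ, Measurable w ∧ (∀ t, w t ∈ ({0, 1} : Set ℝ)) ∧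
      ∀ t ∈ Set.Icc (0 : ℝ) T, ‖∫ s in (0 : ℝ)..t, (v s - w s) • g s‖ ≤ ε :=
  stmt7_general T g hg v hvm hv ε hε
end

section
/- Let E be a real Banach space, L ≥ 0, T > 0, x₀ ∈ E, and let f₀, f₁ : ℝ → E → E be such that for each t, both f₀ t and f₁ t are Lipschitz with constant L. Let v, w : ℝ → ℝ take values in [0, 1], and let x, y : ℝ → E be continuous on [0, T] and satisfy, for all t ∈ [0, T], the integral equations x t = x₀ + ∫_0^t ((1 − v s) • f₀ s (x s) + v s • f₁ s (x s)) ds and y t = x₀ + ∫_0^t ((1 − w s) • f₀ s (y s) + w s • f₁ s (y s)) ds, where all integrands are Bochner integrable on [0, T]. Suppose δ ≥ 0 satisfies ‖∫_0^t (w s − v s) • (f₁ s (x s) − f₀ s (x s)) ds‖ ≤ δ for all t ∈ [0, T]. Then for all t ∈ [0, T], ‖y t − x t‖ ≤ δ * exp (L * t). -/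
/-!
Subtracting the two integral equations, the difference of the integrands splits into the change
of the `w`-embedded field between `y` and `x`, which is bounded by `L ‖y - x‖` because a convex
combination of `L`-Lipschitz maps is `L`-Lipschitz, plus the mismatch term
`(w - v) • (f₁ - f₀)` along `x`, whose running integral is at most `δ`. Hence
`‖y t - x t‖ ≤ δ + ∫₀ᵗ L ‖y - x‖`, and the integral form of Grönwall's inequality gives
`δ e^{L t}`.
-/

open MeasureTheory Set Real Topology

theorem ContinuousOn.hasDerivWithinAt_Ici_integral {E : Type*} [NormedAddCommGroup E]
    [NormedSpace ℝ E] [CompleteSpace E] {g : ℝ → E} {a b t : ℝ}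
    (hg : ContinuousOn g (Icc a b)) (ht : t ∈ Ico a b) :
    HasDerivWithinAt (fun u => ∫ s in a..u, g s) (g t) (Ici t) t := by
  have hmem : Icc a b ∈ 𝓝[>] t := Filter.mem_of_superset (Ioo_mem_nhdsGT ht.2)
    (Ioo_subset_Icc_self.trans (Icc_subset_Icc_left ht.1))
  exact intervalIntegral.integral_hasDerivWithinAt_right
    ((hg.mono (Icc_subset_Icc_right ht.2.le)).intervalIntegrable_of_Icc ht.1)
    ⟨Icc a b, hmem, hg.aestronglyMeasurable measurableSet_Icc⟩
    ((hg t (Ico_subset_Icc_self ht)).mono_of_mem_nhdsWithin hmem)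

theorem le_mul_exp_of_le_add_integral {u : ℝ → ℝ} {K δ a b : ℝ} (hK : 0 ≤ K)
    (hu : ContinuousOn u (Icc a b)) (h : ∀ t ∈ Icc a b, u t ≤ δ + ∫ s in a..t, K * u s) :
    ∀ t ∈ Icc a b, u t ≤ δ * exp (K * (t - a)) := by
  intro t ht
  have hKu : ContinuousOn (fun s => K * u s) (Icc a b) := continuousOn_const.mul hu
  have hφ : ContinuousOn (fun t => δ + ∫ s in a..t, K * u s) (Icc a b) := by
    have hab : uIcc a b = Icc a b := uIcc_of_le (ht.1.trans ht.2)
    have := intervalIntegral.continuousOn_primitive_interval (μ := volume)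
      (hab ▸ hKu.integrableOn_Icc)
    rw [hab] at this
    exact continuousOn_const.add this
  -- Grönwall is applied to the right-hand side `φ = δ + ∫ K u`, whose right derivative is `K u ≤ K φ`.
  have hgrowth : ∀ s ∈ Ico a b, K * u s ≤ K * (δ + ∫ r in a..s, K * u r) + 0 := fun s hs => by
    simpa using mul_le_mul_of_nonneg_left (h s (Ico_subset_Icc_self hs)) hK
  have hbound := le_gronwallBound_of_liminf_deriv_right_le (δ := δ) hφ
    (fun s hs _ hr => ((hKu.hasDerivWithinAt_Ici_integral hs).const_add δ).liminf_right_slope_le hr)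
    (by simp) hgrowth t ht
  rw [gronwallBound_ε0] at hbound
  exact (h t ht).trans hbound

theorem LipschitzWith.convex_combination {α F : Type*} [PseudoMetricSpace α]
    [SeminormedAddCommGroup F] [NormedSpace ℝ F] {f g : α → F} {K : NNReal}
    (hf : LipschitzWith K f) (hg : LipschitzWith K g) {θ : ℝ} (hθ : θ ∈ Icc (0 : ℝ) 1) :
    LipschitzWith K (fun z => (1 - θ) • f z + θ • g z) := by
  refine LipschitzWith.of_dist_le_mul fun a b => ?_
  have h₀ : 0 ≤ 1 - θ := sub_nonneg.2 hθ.2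
  calc dist ((1 - θ) • f a + θ • g a) ((1 - θ) • f b + θ • g b)
      = ‖(1 - θ) • (f a - f b) + θ • (g a - g b)‖ := by
        rw [dist_eq_norm]; congr 1; module
    _ ≤ (1 - θ) * dist (f a) (f b) + θ * dist (g a) (g b) := by
        refine (norm_add_le _ _).trans_eq ?_
        rw [norm_smul, norm_smul, Real.norm_of_nonneg h₀, Real.norm_of_nonneg hθ.1,
          dist_eq_norm, dist_eq_norm]
    _ ≤ (1 - θ) * (K * dist a b) + θ * (K * dist a b) := by
        gcongr
        · exact hf.dist_le_mul a b
        · exact hθ.1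
        · exact hg.dist_le_mul a b
    _ = K * dist a b := by ring

theorem norm_convex_combination_sub_sub_le {E F : Type*} [SeminormedAddCommGroup E]
    [SeminormedAddCommGroup F] [NormedSpace ℝ F] {f₀ f₁ : E → F} {K : NNReal}
    (hf₀ : LipschitzWith K f₀) (hf₁ : LipschitzWith K f₁) {v w : ℝ} (hw : w ∈ Icc (0 : ℝ) 1)
    (a b : E) :
    ‖((1 - w) • f₀ a + w • f₁ a) - ((1 - v) • f₀ b + v • f₁ b) - (w - v) • (f₁ b - f₀ b)‖
      ≤ K * ‖a - b‖ := by
  have h := (hf₀.convex_combination hf₁ hw).norm_sub_le a b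
  convert h using 2
  module

theorem norm_integral_sub_integral_le {E : Type*} [NormedAddCommGroup E] [NormedSpace ℝ E]
    {F G B : ℝ → E} {g : ℝ → ℝ} {a b δ : ℝ} (hab : a ≤ b)
    (hF : IntervalIntegrable F volume a b) (hG : IntervalIntegrable G volume a b)
    (hB : IntervalIntegrable B volume a b) (hg : IntervalIntegrable g volume a b)
    (hle : ∀ s ∈ Ioc a b, ‖F s - G s - B s‖ ≤ g s) (hδ : ‖∫ s in a..b, B s‖ ≤ δ) :
    ‖(∫ s in a..b, F s) - ∫ s in a..b, G s‖ ≤ δ + ∫ s in a..b, g s := by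
  have hsplit : (∫ s in a..b, F s) - ∫ s in a..b, G s
      = (∫ s in a..b, F s - G s - B s) + ∫ s in a..b, B s := by
    rw [intervalIntegral.integral_sub (hF.sub hG) hB, intervalIntegral.integral_sub hF hG]
    abel
  rw [hsplit, add_comm δ]
  exact (norm_add_le _ _).trans (add_le_add
    (intervalIntegral.norm_integral_le_of_norm_le hab (Filter.Eventually.of_forall hle) hg) hδ)

theorem stmt8_general {E : Type*} [NormedAddCommGroup E] [NormedSpace ℝ E] [CompleteSpace E]
    (L : ℝ) (hL : 0 ≤ L) (T : ℝ) (x₀ : E)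
    (f₀ f₁ : ℝ → E → E)
    (hf₀ : ∀ t, LipschitzWith L.toNNReal (f₀ t))
    (hf₁ : ∀ t, LipschitzWith L.toNNReal (f₁ t))
    (v w : ℝ → ℝ)
    (hw : ∀ t, w t ∈ Set.Icc (0 : ℝ) 1)
    (x y : ℝ → E)
    (hxc : ContinuousOn x (Set.Icc 0 T)) (hyc : ContinuousOn y (Set.Icc 0 T))
    (hxint : IntegrableOn (fun s => (1 - v s) • f₀ s (x s) + v s • f₁ s (x s))
      (Set.Icc 0 T))
    (hyint : IntegrableOn (fun s => (1 - w s) • f₀ s (y s) + w s • f₁ s (y s))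
      (Set.Icc 0 T))
    (hzint : IntegrableOn (fun s => (w s - v s) • (f₁ s (x s) - f₀ s (x s)))
      (Set.Icc 0 T))
    (hx : ∀ t ∈ Set.Icc (0 : ℝ) T,
      x t = x₀ + ∫ s in (0 : ℝ)..t, ((1 - v s) • f₀ s (x s) + v s • f₁ s (x s)))
    (hy : ∀ t ∈ Set.Icc (0 : ℝ) T,
      y t = x₀ + ∫ s in (0 : ℝ)..t, ((1 - w s) • f₀ s (y s) + w s • f₁ s (y s)))
    (δ : ℝ)
    (hclose : ∀ t ∈ Set.Icc (0 : ℝ) T,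
      ‖∫ s in (0 : ℝ)..t, (w s - v s) • (f₁ s (x s) - f₀ s (x s))‖ ≤ δ) :
    ∀ t ∈ Set.Icc (0 : ℝ) T, ‖y t - x t‖ ≤ δ * Real.exp (L * t) := by
  have hL' : (L.toNNReal : ℝ) = L := Real.coe_toNNReal L hL
  have hu : ContinuousOn (fun s => ‖y s - x s‖) (Icc 0 T) := (hyc.sub hxc).norm
  suffices h : ∀ t ∈ Icc 0 T, ‖y t - x t‖ ≤ δ + ∫ s in (0 : ℝ)..t, L * ‖y s - x s‖ by
    intro t ht
    simpa using le_mul_exp_of_le_add_integral hL hu h t ht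
  intro t ht
  have hsub : Icc 0 t ⊆ Icc 0 T := Icc_subset_Icc_right ht.2
  have hii {f : ℝ → E} (hf : IntegrableOn f (Icc 0 T)) : IntervalIntegrable f volume 0 t :=
    (intervalIntegrable_iff_integrableOn_Icc_of_le ht.1).2 (hf.mono_set hsub)
  rw [hy t ht, hx t ht, add_sub_add_left_eq_sub]
  refine norm_integral_sub_integral_le ht.1 (hii hyint) (hii hxint) (hii hzint)
    ((continuousOn_const.mul (hu.mono hsub)).intervalIntegrable_of_Icc ht.1) (fun s _ => ?_)
    (hclose t ht)
  simpa only [hL'] using norm_convex_combination_sub_sub_le (hf₀ s) (hf₁ s) (hw s) (y s) (x s)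

/-- Grönwall-type estimate: a switched trajectory `y` driven by a bang-bang
control `w` approximating the relaxed control `v` (in the sense of running
integrals bounded by `δ`) stays within `δ · e^{L t}` of the embedded trajectory
`x`. -/
theorem stmt8 {E : Type*} [NormedAddCommGroup E] [NormedSpace ℝ E] [CompleteSpace E]
    (L : ℝ) (hL : 0 ≤ L) (T : ℝ) (hT : 0 < T) (x₀ : E)
    (f₀ f₁ : ℝ → E → E)
    (hf₀ : ∀ t, LipschitzWith L.toNNReal (f₀ t))
    (hf₁ : ∀ t, LipschitzWith L.toNNReal (f₁ t))
    (v w : ℝ → ℝ)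
    (hv : ∀ t, v t ∈ Set.Icc (0 : ℝ) 1) (hw : ∀ t, w t ∈ Set.Icc (0 : ℝ) 1)
    (x y : ℝ → E)
    (hxc : ContinuousOn x (Set.Icc 0 T)) (hyc : ContinuousOn y (Set.Icc 0 T))
    (hxint : IntegrableOn (fun s => (1 - v s) • f₀ s (x s) + v s • f₁ s (x s))
      (Set.Icc 0 T))
    (hyint : IntegrableOn (fun s => (1 - w s) • f₀ s (y s) + w s • f₁ s (y s))
      (Set.Icc 0 T))
    (hzint : IntegrableOn (fun s => (w s - v s) • (f₁ s (x s) - f₀ s (x s)))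
      (Set.Icc 0 T))
    (hx : ∀ t ∈ Set.Icc (0 : ℝ) T,
      x t = x₀ + ∫ s in (0 : ℝ)..t, ((1 - v s) • f₀ s (x s) + v s • f₁ s (x s)))
    (hy : ∀ t ∈ Set.Icc (0 : ℝ) T,
      y t = x₀ + ∫ s in (0 : ℝ)..t, ((1 - w s) • f₀ s (y s) + w s • f₁ s (y s)))
    (δ : ℝ) (hδ : 0 ≤ δ)
    (hclose : ∀ t ∈ Set.Icc (0 : ℝ) T,
      ‖∫ s in (0 : ℝ)..t, (w s - v s) • (f₁ s (x s) - f₀ s (x s))‖ ≤ δ) :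
    ∀ t ∈ Set.Icc (0 : ℝ) T, ‖y t - x t‖ ≤ δ * Real.exp (L * t) :=
  stmt8_general L hL T x₀ f₀ f₁ hf₀ hf₁ v w hw x y hxc hyc hxint hyint hzint hx hy δ hclose
end
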